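/- Let v be an ab-monomial beginning with the letter a and let x be either a or b. Then 2·φ_t(v·a·x) = 2·κ(v·a·x) + ω(v·a·b). -/

import Mathlib

open scoped TensorProduct

noncomputable section

namespace CD


/-- ab-words: `false` represents the letter `a`, `true` represents the letter `b`. -/
abbrev Word := List Bool

/-- The free associative ℤ-algebra ℤ⟨a,b⟩ on two noncommuting variables. -/
abbrev ZAB := MonoidAlgebra ℤ (FreeMonoid Bool)

/-- The ab-monomial associated to a word. -/
def mon (w : Word) : ZAB := MonoidAlgebra.single (FreeMonoid.ofList w) 1

/-- The variable `a`. -/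
def genA : ZAB := mon [false]
/-- The variable `b`. -/
def genB : ZAB := mon [true]
/-- `c = a + b`. -/
def genC : ZAB := genA + genB
/-- `d = ab + ba`. -/
def genD : ZAB := genA * genB + genB * genA
/-- `a - b`. -/
def amb : ZAB := genA - genB

/-- Extend a function defined on ab-monomials to a ℤ-linear map on ℤ⟨a,b⟩. -/
def lin (f : Word → ZAB) : ZAB →ₗ[ℤ] ZAB :=
  Finsupp.lift ZAB ℤ (FreeMonoid Bool) (fun w => f (FreeMonoid.toList w)) ∘ₗ
    (MonoidAlgebra.coeffLinearEquiv ℤ).toLinearMap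

/-- κ : κ(aᵐ) = (a-b)ᵐ, and 0 on all other ab-monomials. -/
def kappaW (w : Word) : ZAB :=
  if ∀ x ∈ w, x = false then amb ^ w.length else 0

/-- β : β(bᵐ) = (a-b)ᵐ, and 0 on all other ab-monomials. -/
def betaW (w : Word) : ZAB :=
  if ∀ x ∈ w, x = true then amb ^ w.length else 0

/-- η : η(bᵐaᵏ) = 2·(a-b)^{m+k}, and 0 on all other ab-monomials. -/
def etaW (w : Word) : ZAB :=
  if List.IsChain (· ≥ ·) w then (2 : ℤ) • amb ^ w.length else 0

/-- λ_t : λ_t(bᵐ) = (a-b)ᵐ, λ_t(bᵐa) = (a-b)^{m+1}, and 0 on all other ab-monomials. -/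
def lamTW (w : Word) : ZAB :=
  if List.IsChain (· ≥ ·) w ∧ w.count false ≤ 1 then amb ^ w.length else 0

/-- λ_ub = η - 2·β. -/
def lamUbW (w : Word) : ZAB := etaW w - (2 : ℤ) • betaW w

/-- ω : first replace each occurrence of ab by 2d, then each remaining letter by c. -/
def omegaW : Word → ZAB
  | [] => 1
  | false :: true :: w => ((2 : ℤ) • genD) * omegaW w
  | _ :: w => genC * omegaW w

/-- H′ : removes the last letter of an ab-monomial (`H′(1) = 0`). -/
def HpW (w : Word) : ZAB := if w = [] then 0 else mon w.dropLast

/-- r : r(1) = 0, r(v·a) = v, r(v·b) = 0. -/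
def rW (w : Word) : ZAB := if w.getLast? = some false then mon w.dropLast else 0

/-- The reversal involution on ab-monomials. -/
def revW (w : Word) : ZAB := mon w.reverse

/-- `conv F G (w) = Σ_w F(w₍₁₎)·b·G(w₍₂₎)`, the sum over the coproduct of the word `w`,
i.e. over all ways of removing one letter from `w`, splitting it in two pieces. -/
def conv (F G : Word → ZAB) (w : Word) : ZAB :=
  ∑ i ∈ Finset.range w.length, F (w.take i) * genB * G (w.drop (i + 1))

/-- `tailChain lam j (w) = Σ_w η(w₍₁₎)·b·η(w₍₂₎)·b ⋯ b·η(w₍ⱼ₎)·b·lam(w₍ⱼ₊₁₎)`: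
a chain of `j` η's followed by the map `lam`, summed over the iterated coproduct. -/
def tailChain (lam : Word → ZAB) : ℕ → Word → ZAB
  | 0 => lam
  | j + 1 => conv etaW (tailChain lam j)

/-- φ_k : φ_1 = κ and, for k ≥ 2, `φ_k(v) = Σ_v κ(v₍₁₎)·b·η(v₍₂₎)·b ⋯ b·η(v₍ₖ₎)`,
the sum over the iterated coproduct Δ^{k-1}. -/
def phiK : ℕ → Word → ZAB
  | 0 => fun _ => 0
  | 1 => kappaW
  | k + 2 => conv kappaW (tailChain etaW k)

/-- φ_{t,k} : φ_{t,1} = κ and, for k ≥ 2,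
`φ_{t,k}(v) = Σ_v κ(v₍₁₎)·b·η(v₍₂₎)·b ⋯ b·η(v₍ₖ₋₁₎)·b·λ_t(v₍ₖ₎)`. -/
def phiTK : ℕ → Word → ZAB
  | 0 => fun _ => 0
  | 1 => kappaW
  | k + 2 => conv kappaW (tailChain lamTW k)

/-- φ_{ub,k} : φ_{ub,1} = κ and, for k ≥ 2,
`φ_{ub,k}(v) = Σ_v κ(v₍₁₎)·b·η(v₍₂₎)·b ⋯ b·η(v₍ₖ₋₁₎)·b·λ_ub(v₍ₖ₎)`. -/
def phiUbK : ℕ → Word → ZAB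
  | 0 => fun _ => 0
  | 1 => kappaW
  | k + 2 => conv kappaW (tailChain lamUbW k)

/-- φ = Σ_{k ≥ 1} φ_k (on a word of length ℓ, only terms with k ≤ ℓ + 1 are nonzero). -/
def phiW (w : Word) : ZAB := ∑ k ∈ Finset.range (w.length + 2), phiK k w

/-- φ_t = Σ_{k ≥ 1} φ_{t,k}. -/
def phiTW (w : Word) : ZAB := ∑ k ∈ Finset.range (w.length + 2), phiTK k w

/-- φ_ub = Σ_{k ≥ 1} φ_{ub,k}. -/
def phiUbW (w : Word) : ZAB := ∑ k ∈ Finset.range (w.length + 2), phiUbK k w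

/-- The coproduct Δ on ℤ⟨a,b⟩: Δ(u₁u₂⋯uₙ) = Σᵢ u₁⋯u_{i-1} ⊗ u_{i+1}⋯uₙ. -/
def Delta : ZAB →ₗ[ℤ] (ZAB ⊗[ℤ] ZAB) :=
  Finsupp.lift (ZAB ⊗[ℤ] ZAB) ℤ (FreeMonoid Bool)
    (fun w => ∑ i ∈ Finset.range (FreeMonoid.toList w).length,
      mon ((FreeMonoid.toList w).take i) ⊗ₜ[ℤ] mon ((FreeMonoid.toList w).drop (i + 1))) ∘ₗ
    (MonoidAlgebra.coeffLinearEquiv ℤ).toLinearMap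

/-- For linear maps F, G, the linear map `u ⊗ w ↦ F(u)·b·G(w)`; applying it to Δ(v)
gives the Sweedler sum `Σ_v F(v₍₁₎)·b·G(v₍₂₎)`. -/
def sandwich (F G : ZAB →ₗ[ℤ] ZAB) : (ZAB ⊗[ℤ] ZAB) →ₗ[ℤ] ZAB :=
  TensorProduct.lift
    (((LinearMap.mul ℤ ZAB).comp ((LinearMap.mulRight ℤ genB).comp F)).compl₂ G)

/-! Let `T = Σ_j tailChain λ_t j` be the sum of all tails `η b η b ⋯ b λ_t`. Splitting off the
first factor gives `φ_t = κ + Σ κ(v₍₁₎) b T(v₍₂₎)` and `T = λ_t + Σ η(v₍₁₎) b T(v₍₂₎)`; since κ and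
η are multiplicative in leading letters, peeling these off gives the recursions `T(b u) = c T(u)`,
`T(ab u) = 2d T(u)` and `T(aa u) = c T(a u)` for `u ≠ 1`. These are ω's own recursions, so
`T(s a x) = ω(s a b)`. Finally `(φ_t - κ)(a u) = b T(u) + (a-b) (φ_t - κ)(u)`, and with
`c = 2b + (a-b)` and `d = bc + (a-b)b` twice this collapses to ω as well. -/

lemma mon_mul (u v : Word) : mon u * mon v = mon (u ++ v) := by
  simp [mon, MonoidAlgebra.single_mul_single]

lemma genC_eq : genC = (2 : ℤ) • genB + amb := by
  simp only [genC, genA, amb, two_smul]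
  abel

lemma genD_eq : genD = genB * genC + amb * genB := by
  simp only [genD, genC, genA, genB, amb, mul_add, sub_mul, mon_mul, List.cons_append,
    List.nil_append]
  abel

lemma genC_mul_self_sub_amb_mul_self : genC * genC - amb * amb = (2 : ℤ) • genD := by
  simp only [genC, genD, genA, genB, amb, mul_add, add_mul, sub_mul, mul_sub, mon_mul,
    List.cons_append, List.nil_append, smul_add, two_smul]
  abel

lemma kappaW_nil : kappaW [] = 1 := by simp [kappaW]

lemma kappaW_cons_false (t : Word) : kappaW (false :: t) = amb * kappaW t := by
  simp [kappaW, pow_succ']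

lemma kappaW_cons_true (t : Word) : kappaW (true :: t) = 0 := by
  simp [kappaW]

lemma etaW_nil : etaW [] = (2 : ℤ) • 1 := by simp [etaW]

lemma etaW_singleton_false : etaW [false] = (2 : ℤ) • amb := by simp [etaW]

lemma etaW_cons_true (t : Word) : etaW (true :: t) = amb * etaW t := by
  have h : List.IsChain (· ≥ ·) (true :: t) ↔ List.IsChain (· ≥ ·) t := by
    rw [List.isChain_cons]; simp
  by_cases hc : List.IsChain (· ≥ ·) t <;> simp [etaW, h, hc, pow_succ', two_mul, mul_add]

lemma etaW_false_false (t : Word) : etaW (false :: false :: t) = amb * etaW (false :: t) := by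
  have h : List.IsChain (· ≥ ·) (false :: false :: t) ↔ List.IsChain (· ≥ ·) (false :: t) := by
    rw [List.isChain_cons_cons]; simp
  by_cases hc : List.IsChain (· ≥ ·) (false :: t) <;>
    simp [etaW, h, hc, pow_succ', two_mul, mul_add]

lemma etaW_false_true (t : Word) : etaW (false :: true :: t) = 0 := by
  rw [etaW, if_neg (by rw [List.isChain_cons_cons]; simp)]

lemma lamTW_nil : lamTW [] = 1 := by simp [lamTW]

lemma lamTW_singleton_false : lamTW [false] = amb := by simp [lamTW]

lemma lamTW_cons_true (t : Word) : lamTW (true :: t) = amb * lamTW t := by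
  have h : List.IsChain (· ≥ ·) (true :: t) ↔ List.IsChain (· ≥ ·) t := by
    rw [List.isChain_cons]; simp
  by_cases hc : List.IsChain (· ≥ ·) t ∧ t.count false ≤ 1 <;>
    simp [lamTW, h, hc, pow_succ']

lemma lamTW_false_cons (y : Bool) (t : Word) : lamTW (false :: y :: t) = 0 := by
  cases y
  · rw [lamTW, if_neg]; simp
  · rw [lamTW, if_neg]; rw [List.isChain_cons_cons]; simp

lemma lamTW_false_of_ne_nil {t : Word} (ht : t ≠ []) : lamTW (false :: t) = 0 := by
  obtain ⟨y, t, rfl⟩ := List.exists_cons_of_ne_nil ht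
  exact lamTW_false_cons y t

section Conv

variable (F G : Word → ZAB)

lemma conv_nil : conv F G [] = 0 := by simp [conv]

lemma conv_cons (y : Bool) (r : Word) :
    conv F G (y :: r) = F [] * genB * G r + conv (fun t => F (y :: t)) G r := by
  rw [conv, List.length_cons, Finset.sum_range_succ', add_comm]
  simp [conv]

lemma conv_cons_of_mul {y : Bool} {m : ZAB} (hF : ∀ t, F (y :: t) = m * F t) (r : Word) :
    conv F G (y :: r) = F [] * genB * G r + m * conv F G r := by
  rw [conv_cons]
  simp only [hF, conv, Finset.mul_sum, mul_assoc]

lemma conv_sum {ι : Type*} (G : ι → Word → ZAB) (s : Finset ι) (w : Word) :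
    conv F (fun v => ∑ j ∈ s, G j v) w = ∑ j ∈ s, conv F (G j) w := by
  simp only [conv, Finset.mul_sum]
  exact Finset.sum_comm

lemma conv_congr_right {G G' : Word → ZAB} {w : Word}
    (h : ∀ v : Word, v.length < w.length → G v = G' v) : conv F G w = conv F G' w := by
  refine Finset.sum_congr rfl fun i hi => ?_
  rw [h _ (by rw [List.length_drop]; have := Finset.mem_range.1 hi; omega)]

end Conv

section TailSum

variable (lam : Word → ZAB)

lemma tailChain_eq_zero_of_length_lt {j : ℕ} {w : Word} (h : w.length < j) :
    tailChain lam j w = 0 := by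
  induction j generalizing w with
  | zero => omega
  | succ j ih =>
    rw [tailChain, conv]
    refine Finset.sum_eq_zero fun i hi => ?_
    rw [ih (by rw [List.length_drop]; have := Finset.mem_range.1 hi; omega), mul_zero]

-- The whole series `Σ_{j ≥ 0} tailChain lam j w`: its terms vanish for `j > w.length`.
def tailSum (w : Word) : ZAB := ∑ j ∈ Finset.range (w.length + 1), tailChain lam j w

lemma sum_range_tailChain {w : Word} {N : ℕ} (h : w.length < N) :
    ∑ j ∈ Finset.range N, tailChain lam j w = tailSum lam w := by
  symm
  refine Finset.sum_subset (Finset.range_subset_range.2 (by omega)) fun j _ hj => ?_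
  exact tailChain_eq_zero_of_length_lt lam (by have := Finset.mem_range.not.1 hj; omega)

lemma conv_tailSum (F : Word → ZAB) (w : Word) :
    ∑ j ∈ Finset.range w.length, conv F (tailChain lam j) w = conv F (tailSum lam) w := by
  rw [← conv_sum F (tailChain lam)]
  exact conv_congr_right F fun v hv => sum_range_tailChain lam hv

lemma tailSum_eq_add_conv (w : Word) : tailSum lam w = lam w + conv etaW (tailSum lam) w := by
  rw [tailSum, Finset.sum_range_succ', add_comm, ← conv_tailSum]
  rfl

end TailSum

lemma phiTW_eq_add_conv (w : Word) : phiTW w = kappaW w + conv kappaW (tailSum lamTW) w := by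
  rw [phiTW, Finset.sum_range_succ', Finset.sum_range_succ', ← conv_tailSum]
  simp only [phiTK, add_zero]
  exact add_comm _ _

lemma conv_kappaW_cons_false (G : Word → ZAB) (r : Word) :
    conv kappaW G (false :: r) = genB * G r + amb * conv kappaW G r := by
  rw [conv_cons_of_mul _ _ kappaW_cons_false, kappaW_nil, one_mul]

lemma conv_kappaW_cons_true (G : Word → ZAB) (r : Word) :
    conv kappaW G (true :: r) = genB * G r := by
  rw [conv_cons_of_mul _ _ (m := 0) fun t => by rw [kappaW_cons_true, zero_mul], kappaW_nil,
    one_mul, zero_mul, add_zero]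

lemma conv_etaW_cons_true (G : Word → ZAB) (r : Word) :
    conv etaW G (true :: r) = (2 : ℤ) • (genB * G r) + amb * conv etaW G r := by
  rw [conv_cons_of_mul _ _ etaW_cons_true, etaW_nil, smul_mul_assoc, smul_mul_assoc, one_mul]

lemma conv_etaW_false_false (G : Word → ZAB) (u : Word) :
    conv etaW G (false :: false :: u) =
      (2 : ℤ) • (genB * G (false :: u)) + amb * conv etaW G (false :: u) := by
  rw [conv_cons, conv_cons_of_mul _ _ etaW_false_false, conv_cons etaW G false u,
    etaW_singleton_false, etaW_nil]
  simp only [mul_add, smul_mul_assoc, mul_smul_comm, one_mul, mul_assoc]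

lemma conv_etaW_false_true (G : Word → ZAB) (u : Word) :
    conv etaW G (false :: true :: u) =
      (2 : ℤ) • (genB * G (true :: u)) + (2 : ℤ) • (amb * (genB * G u)) := by
  rw [conv_cons, conv_cons_of_mul _ _ (m := 0) fun t => by rw [etaW_false_true, zero_mul],
    etaW_singleton_false, etaW_nil, zero_mul, add_zero]
  simp only [smul_mul_assoc, one_mul, mul_assoc]

lemma omegaW_nil : omegaW [] = 1 := rfl

lemma omegaW_cons_true (t : Word) : omegaW (true :: t) = genC * omegaW t := rfl

lemma omegaW_false_true (t : Word) : omegaW (false :: true :: t) = (2 : ℤ) • genD * omegaW t :=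
  rfl

lemma omegaW_false_false (t : Word) : omegaW (false :: false :: t) = genC * omegaW (false :: t) :=
  rfl

lemma tailSum_nil : tailSum lamTW [] = 1 := by
  rw [tailSum_eq_add_conv, lamTW_nil, conv_nil, add_zero]

lemma tailSum_singleton_false : tailSum lamTW [false] = genC := by
  rw [tailSum_eq_add_conv, lamTW_singleton_false, conv_cons, conv_nil, tailSum_nil, etaW_nil,
    genC_eq]
  simp only [smul_mul_assoc, one_mul, mul_one, add_zero]
  exact add_comm _ _

lemma tailSum_cons_true (u : Word) : tailSum lamTW (true :: u) = genC * tailSum lamTW u := by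
  rw [tailSum_eq_add_conv lamTW (true :: u), lamTW_cons_true, conv_etaW_cons_true,
    tailSum_eq_add_conv lamTW u, genC_eq]
  simp only [smul_mul_assoc, mul_add, add_mul, smul_add]
  abel

lemma tailSum_false_false (u : Word) :
    tailSum lamTW (false :: false :: u) =
      genC * tailSum lamTW (false :: u) - amb * lamTW (false :: u) := by
  rw [tailSum_eq_add_conv lamTW (false :: false :: u), lamTW_false_cons, conv_etaW_false_false,
    tailSum_eq_add_conv lamTW (false :: u), genC_eq]
  simp only [smul_mul_assoc, mul_add, add_mul, smul_add]
  abel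

lemma tailSum_false_true (u : Word) :
    tailSum lamTW (false :: true :: u) = (2 : ℤ) • genD * tailSum lamTW u := by
  rw [tailSum_eq_add_conv lamTW (false :: true :: u), lamTW_false_cons, conv_etaW_false_true,
    tailSum_cons_true, zero_add, ← mul_assoc, ← mul_assoc, ← smul_add, ← add_mul, ← genD_eq,
    smul_mul_assoc]

theorem tailSum_append_false_pair (x : Bool) :
    ∀ s : Word, tailSum lamTW (s ++ [false, x]) = omegaW (s ++ [false, true])
  | [] => by
    rw [List.nil_append, List.nil_append, omegaW_false_true, omegaW_nil, mul_one]
    cases x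
    · rw [tailSum_false_false, tailSum_singleton_false, lamTW_singleton_false,
        genC_mul_self_sub_amb_mul_self]
    · rw [tailSum_false_true, tailSum_nil, mul_one]
  | true :: s => by
    have ih := tailSum_append_false_pair x s
    simp only [List.cons_append]
    rw [tailSum_cons_true, omegaW_cons_true, ih]
  | false :: true :: s => by
    have ih := tailSum_append_false_pair x s
    simp only [List.cons_append]
    rw [tailSum_false_true, omegaW_false_true, ih]
  | [false] => by
    have ih := tailSum_append_false_pair x []
    simp only [List.cons_append, List.nil_append] at ih ⊢
    rw [tailSum_false_false, lamTW_false_cons, mul_zero, sub_zero, omegaW_false_false, ih]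
  | false :: false :: s => by
    have ih := tailSum_append_false_pair x (false :: s)
    simp only [List.cons_append] at ih ⊢
    rw [tailSum_false_false, lamTW_false_of_ne_nil (by simp), mul_zero, sub_zero,
      omegaW_false_false, ih]
termination_by s => s.length

lemma conv_kappaW_tailSum_pair (x : Bool) : conv kappaW (tailSum lamTW) [false, x] = genD := by
  rw [conv_kappaW_cons_false, genD_eq]
  cases x
  · rw [tailSum_singleton_false, conv_kappaW_cons_false, conv_nil, tailSum_nil, mul_zero,
      add_zero, mul_one]
  · rw [tailSum_cons_true, conv_kappaW_cons_true, tailSum_nil, mul_one, mul_one]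

theorem two_smul_conv_kappaW_tailSum (x : Bool) (s : Word) :
    (2 : ℤ) • conv kappaW (tailSum lamTW) ((false :: s) ++ [false, x]) =
      omegaW ((false :: s) ++ [false, true]) := by
  induction s with
  | nil =>
    have hT := tailSum_append_false_pair x []
    simp only [List.cons_append, List.nil_append] at hT ⊢
    rw [conv_kappaW_cons_false, conv_kappaW_tailSum_pair, hT, omegaW_false_false,
      omegaW_false_true, omegaW_nil, mul_one, genC_eq]
    simp only [add_mul, smul_mul_assoc, mul_smul_comm, smul_add]
  | cons y s ih =>
    cases y
    · have hT := tailSum_append_false_pair x (false :: s)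
      simp only [List.cons_append] at ih hT ⊢
      rw [conv_kappaW_cons_false, smul_add, ← mul_smul_comm (2 : ℤ) amb, ih, hT,
        omegaW_false_false, genC_eq, add_mul, smul_mul_assoc]
    · have hT := tailSum_append_false_pair x s
      simp only [List.cons_append] at hT ⊢
      rw [conv_kappaW_cons_false, conv_kappaW_cons_true, tailSum_cons_true, hT,
        omegaW_false_true, ← mul_assoc, ← mul_assoc, ← add_mul, ← genD_eq, smul_mul_assoc]

/-- for an ab-monomial `v` beginning with `a` and a letter `x`,
`2·φ_t(v·a·x) = 2·κ(v·a·x) + ω(v·a·b)`. -/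
theorem two_phiT_ax (w : Word) (x : Bool) :
    (2 : ℤ) • phiTW ((false :: w) ++ [false, x]) =
      (2 : ℤ) • kappaW ((false :: w) ++ [false, x]) +
        omegaW ((false :: w) ++ [false, true]) := by
  rw [phiTW_eq_add_conv, smul_add, two_smul_conv_kappaW_tailSum]

end CD

end
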